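/- Let X, Y, Z be random variables with values in standard Borel spaces, with Z = φ(Y) for a measurable φ. Let λ be a measure on the target space of X. If the regular conditional distribution μ(y,·) of X given Y is absolutely continuous with respect to λ for L(Y)-a.e. y, then the regular conditional distribution μ'(z,·) of X given Z is absolutely continuous with respect to λ for L(Z)-a.e. z. -/

import Mathlib

/-!
Since `Z = φ(Y)`, the conditional law of `X` given `Z` is a.e. the mixture
`μ'(z, ·) = ∫ μ(y, ·) ν(z, dy)`, where `ν` is the conditional law of `Y` given `Z`.
The mixing measures `ν(z, ·)` average to the law of `Y`, so the null set of those `y` for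
which `μ(y, ·)` is not `≪ λ` is `ν(z, ·)`-null for a.e. `z`, and a mixture of measures that
are a.e. `≪ λ` is `≪ λ`.
-/

open MeasureTheory ProbabilityTheory

namespace MeasureTheory.Measure

variable {β γ Ω : Type*} [MeasurableSpace β] [MeasurableSpace γ] [MeasurableSpace Ω]

lemma map_prodMap_compProd_eq_compProd_comp {ρ : Measure β} [SFinite ρ]
    {κ : Kernel β Ω} [IsSFiniteKernel κ] {η : Kernel γ β} [IsSFiniteKernel η]
    {f : β → γ} (hf : Measurable f) (hη : ρ.map f ⊗ₘ η = ρ.map fun y ↦ (f y, y)) :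
    (ρ ⊗ₘ κ).map (Prod.map f id) = ρ.map f ⊗ₘ (κ ∘ₖ η) := by
  have hgraph : ρ.map (fun y ↦ (f y, y)) = (Kernel.deterministic f hf ×ₖ Kernel.id) ∘ₘ ρ := by
    rw [Kernel.id, Kernel.deterministic_prod_deterministic, deterministic_comp_eq_map]
    rfl
  calc (ρ ⊗ₘ κ).map (Prod.map f id)
      = (Kernel.deterministic f hf ∥ₖ Kernel.id) ∘ₘ (Kernel.id ×ₖ κ) ∘ₘ ρ := by
        rw [← compProd_eq_comp_prod, Kernel.id, Kernel.deterministic_parallelComp_deterministic,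
          deterministic_comp_eq_map]
    _ = (Kernel.id ∥ₖ κ) ∘ₘ (Kernel.deterministic f hf ×ₖ Kernel.id) ∘ₘ ρ := by
        rw [comp_assoc, comp_assoc, Kernel.parallelComp_comp_prod, Kernel.parallelComp_comp_prod,
          Kernel.id_comp, Kernel.comp_id, Kernel.id_comp, Kernel.comp_id]
    _ = ρ.map f ⊗ₘ (κ ∘ₖ η) := by
        rw [← hgraph, ← hη, parallelComp_comp_compProd]

lemma ae_comp_apply_absolutelyContinuous {ν : Measure γ} {η : Kernel γ β} [IsMarkovKernel η]
    {κ : Kernel β Ω} {ξ : Measure Ω} (h : ∀ᵐ y ∂(η ∘ₘ ν), κ y ≪ ξ) :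
    ∀ᵐ z ∂ν, (κ ∘ₖ η) z ≪ ξ := by
  filter_upwards [ae_ae_of_ae_comp h] with z hz
  simpa [Kernel.comp_apply, const_comp] using
    AbsolutelyContinuous.comp_left (η z) (η := Kernel.const β ξ) hz

end MeasureTheory.Measure

namespace ProbabilityTheory

variable {α β γ Ω : Type*} {mα : MeasurableSpace α} [MeasurableSpace β] [MeasurableSpace γ]
  [MeasurableSpace Ω] [StandardBorelSpace Ω] [Nonempty Ω] {μ : Measure α} [IsFiniteMeasure μ]
  {X : α → Ω} {Y : α → β}

lemma condDistrib_comp_ae_eq_comp_condDistrib [StandardBorelSpace β] [Nonempty β]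
    (hX : Measurable X) (hY : Measurable Y) {f : β → γ} (hf : Measurable f) :
    condDistrib X (f ∘ Y) μ =ᵐ[μ.map (f ∘ Y)] condDistrib X Y μ ∘ₖ condDistrib Y (f ∘ Y) μ := by
  refine condDistrib_ae_eq_of_measure_eq_compProd _ hX.aemeasurable ?_
  have hgraph : (μ.map Y).map f ⊗ₘ condDistrib Y (f ∘ Y) μ = (μ.map Y).map fun y ↦ (f y, y) := by
    rw [Measure.map_map hf hY, compProd_map_condDistrib hY.aemeasurable,
      Measure.map_map (by fun_prop) hY]
    rfl
  rw [← Measure.map_map hf hY, ← Measure.map_prodMap_compProd_eq_compProd_comp hf hgraph,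
    compProd_map_condDistrib hX.aemeasurable, Measure.map_map (by fun_prop) (by fun_prop)]
  rfl

end ProbabilityTheory

theorem stmt14_general {Ω 𝔛 𝔜 ℨ : Type*} [MeasurableSpace Ω]
    [MeasurableSpace 𝔛] [StandardBorelSpace 𝔛] [Nonempty 𝔛]
    [MeasurableSpace 𝔜] [StandardBorelSpace 𝔜]
    [MeasurableSpace ℨ]
    (P : Measure Ω) [IsProbabilityMeasure P]
    (X : Ω → 𝔛) (Y : Ω → 𝔜) (φ : 𝔜 → ℨ)
    (hX : Measurable X) (hY : Measurable Y) (hφ : Measurable φ)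
    (lam : Measure 𝔛)
    (hac : ∀ᵐ y ∂(P.map Y), (condDistrib X Y P) y ≪ lam) :
    ∀ᵐ z ∂(P.map (φ ∘ Y)), (condDistrib X (φ ∘ Y) P) z ≪ lam := by
  have : Nonempty 𝔜 := ⟨Y (nonempty_of_isProbabilityMeasure P).some⟩
  rw [← condDistrib_comp_map (hφ.comp hY).aemeasurable hY.aemeasurable] at hac
  filter_upwards [condDistrib_comp_ae_eq_comp_condDistrib hX hY hφ,
    Measure.ae_comp_apply_absolutelyContinuous hac] with z hz hz_ac
  rwa [hz]

/-- If the regular conditional distribution of `X` given `Y` is a.e. absolutely continuous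
with respect to `λ`, and `Z = φ ∘ Y`, then the regular conditional distribution of `X`
given `Z` is a.e. absolutely continuous with respect to `λ`. -/
theorem stmt14 {Ω 𝔛 𝔜 ℨ : Type*} [MeasurableSpace Ω]
    [MeasurableSpace 𝔛] [StandardBorelSpace 𝔛] [Nonempty 𝔛]
    [MeasurableSpace 𝔜] [StandardBorelSpace 𝔜]
    [MeasurableSpace ℨ] [StandardBorelSpace ℨ]
    (P : Measure Ω) [IsProbabilityMeasure P]
    (X : Ω → 𝔛) (Y : Ω → 𝔜) (φ : 𝔜 → ℨ)
    (hX : Measurable X) (hY : Measurable Y) (hφ : Measurable φ)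
    (lam : Measure 𝔛)
    (hac : ∀ᵐ y ∂(P.map Y), (condDistrib X Y P) y ≪ lam) :
    ∀ᵐ z ∂(P.map (φ ∘ Y)), (condDistrib X (φ ∘ Y) P) z ≪ lam :=
  stmt14_general P X Y φ hX hY hφ lam hac
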